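/- Let q be a positive integer and G a group. Then the exponent of ∇^q(G) divides q; that is, x^q = 1 for every x ∈ ∇^q(G). Moreover, ∇^q(G) is abelian, and for all g, h, a, b ∈ G the elements g⊗g and (g⊗h)(h⊗g) commute with a⊗b in G⊗^q G. -/

import Mathlib

/-!
Nonabelian tensor square modulo `q` (Conduché–Ellis / Brown–Loday for `q = 0`),
presented by generators `g ⊗ h` and `{(g,g)}` with the defining relations.
-/

namespace QTensor

/-- Generators of the `q`-tensor square: `t g h` stands for `g ⊗ h`,
and `d g` stands for the symbol `{(g,g)}`. -/
inductive Gen (G : Type) : Type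
  | t : G → G → Gen G
  | d : G → Gen G

variable (G : Type) [Group G]

/-- The word `g ⊗ h` in the free group on the generators. -/
def T (g h : G) : FreeGroup (Gen G) := FreeGroup.of (Gen.t g h)

/-- The word `{(g,g)}` in the free group on the generators. -/
def D (g : G) : FreeGroup (Gen G) := FreeGroup.of (Gen.d g)

/-- The word `∏_{i=1}^{q-1} (g⁻¹ ⊗ (^(g^(1-q+i)) g₁)^i)` appearing in relation (4). -/
def relProd (q : ℕ) (g g₁ : G) : FreeGroup (Gen G) :=
  ((List.range (q - 1)).map (fun j =>
    T G g⁻¹ ((g ^ ((1 : ℤ) - (q : ℤ) + (j + 1 : ℕ)) * g₁ *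
      (g ^ ((1 : ℤ) - (q : ℤ) + (j + 1 : ℕ)))⁻¹) ^ (j + 1)))).prod

/-- The defining relations of the `q`-tensor square.  For `q = 0` the symbols
`{(g,g)}` are killed, so that the group is the Brown–Loday nonabelian tensor
square generated by the `g ⊗ h` subject to relations (1) and (2). -/
def rels (q : ℕ) : Set (FreeGroup (Gen G)) :=
  {r | ∃ g g₁ h : G,
      r = T G (g * g₁) h * (T G (g * g₁ * g⁻¹) (g * h * g⁻¹) * T G g h)⁻¹} ∪
  {r | ∃ g h h₁ : G,
      r = T G g (h * h₁) * (T G g h * T G (h * g * h⁻¹) (h * h₁ * h⁻¹))⁻¹} ∪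
  {r | ∃ g g₁ h₁ : G,
      r = D G g * T G g₁ h₁ * (D G g)⁻¹ *
        (T G (g ^ q * g₁ * (g ^ q)⁻¹) (g ^ q * h₁ * (g ^ q)⁻¹))⁻¹} ∪
  {r | ∃ g g₁ : G,
      r = D G (g * g₁) * (D G g * relProd G q g g₁ * D G g₁)⁻¹} ∪
  {r | ∃ g g₁ : G,
      r = D G g * D G g₁ * (D G g)⁻¹ * (D G g₁)⁻¹ * (T G (g ^ q) (g₁ ^ q))⁻¹} ∪
  {r | ∃ g h : G,
      r = D G (g * h * g⁻¹ * h⁻¹) * ((T G g h) ^ q)⁻¹} ∪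
  {r | q = 0 ∧ ∃ g : G, r = D G g}

/-- The nonabelian tensor square modulo `q`, `G ⊗^q G`. -/
def tensorSquare (q : ℕ) : Type := PresentedGroup (rels G q)

instance (q : ℕ) : Group (tensorSquare G q) := by unfold tensorSquare; infer_instance

/-- The element `g ⊗ h` of `G ⊗^q G`. -/
def tmk (q : ℕ) (g h : G) : tensorSquare G q := PresentedGroup.of (Gen.t g h)

/-- The element `{(g,g)}` of `G ⊗^q G`. -/
def dmk (q : ℕ) (g : G) : tensorSquare G q := PresentedGroup.of (Gen.d g)

/-- `∇^q(G)`, the normal closure of the elements `g ⊗ g` in `G ⊗^q G`. -/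
def nabla (q : ℕ) : Subgroup (tensorSquare G q) :=
  Subgroup.normalClosure {x | ∃ g : G, x = tmk G q g g}

instance (q : ℕ) : (nabla G q).Normal := Subgroup.normalClosure_normal

/-- The exterior square modulo `q`, `G ∧^q G = (G ⊗^q G)/∇^q(G)`. -/
def extSquare (q : ℕ) : Type := tensorSquare G q ⧸ nabla G q

instance (q : ℕ) : Group (extSquare G q) := by unfold extSquare; infer_instance

/-- The element `g ∧ h` of `G ∧^q G`. -/
def wmk (q : ℕ) (g h : G) : extSquare G q := QuotientGroup.mk (tmk G q g h)

/-- The image of the symbol `{(g,g)}` in `G ∧^q G`. -/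
def dwmk (q : ℕ) (g : G) : extSquare G q := QuotientGroup.mk (dmk G q g)

/-- The exterior centre variant `Z^∧_q(G) = {g : g ∧ h = 1 for all h}` (as a set). -/
def Zext (q : ℕ) : Set G := {g | ∀ h : G, wmk G q g h = 1}

/-- `E^∧_q(G) = {g ∈ Z^∧_q(G) : {(g,g)} = 1 in G ∧^q G}` (as a set); for `q = 0`
the second condition is automatic, so `E^∧_0(G) = Z^∧(G)`. -/
def Eext (q : ℕ) : Set G := {g | (∀ h : G, wmk G q g h = 1) ∧ dwmk G q g = 1}

/-- The subgroup `G^q[G,G]` generated by all `q`-th powers and all commutators. -/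
def qPowComm (q : ℕ) : Subgroup G :=
  Subgroup.closure ({x | ∃ g : G, x = g ^ q} ∪ {x | ∃ a b : G, x = a * b * a⁻¹ * b⁻¹})

theorem pow_mem_qPowComm (q : ℕ) (g : G) : g ^ q ∈ qPowComm G q :=
  Subgroup.subset_closure (Or.inl ⟨g, rfl⟩)

theorem commutator_mem_qPowComm (q : ℕ) (a b : G) :
    a * b * a⁻¹ * b⁻¹ ∈ qPowComm G q :=
  Subgroup.subset_closure (Or.inr ⟨a, b, rfl⟩)

open scoped commutatorElement in
theorem mem_commutator (a b : G) : ⁅a, b⁆ ∈ commutator G :=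
  Subgroup.commutator_mem_commutator (Subgroup.mem_top a) (Subgroup.mem_top b)

/-- `M₀^q(G)`: the subgroup of `G ∧^q G` generated by the `x ∧ y` with `[x,y] = 1`.
(It is contained in the `q`-Schur multiplier `M^q(G)`.) -/
def M0 (q : ℕ) : Subgroup (extSquare G q) :=
  Subgroup.closure {x | ∃ a b : G, a * b = b * a ∧ x = wmk G q a b}

/-- `M̂₀^q(G)`: the subgroup of `G ∧^q G` generated by the `x ∧ y` with `[x,y] = 1`
together with the `{(g,g)}` with `g^q = 1`. -/
def M0hat (q : ℕ) : Subgroup (extSquare G q) :=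
  Subgroup.closure
    ({x | ∃ a b : G, a * b = b * a ∧ x = wmk G q a b} ∪
     {x | ∃ g : G, g ^ q = 1 ∧ x = dwmk G q g})

/-- A group `Q` is capable if `Q ≅ E/Z(E)` for some group `E`. -/
def Capable (Q : Type) [Group Q] : Prop :=
  ∃ (E : Type) (_ : Group E), Nonempty (Q ≃* E ⧸ Subgroup.center E)

end QTensor

/-!
Applying relations (1) and (2) to `(g x) ⊗ (h y)` in the two possible orders shows that
conjugation by `g ⊗ h` acts on tensors as conjugation by `[g, h]` in both factors. Hence `g ⊗ g`
and, since `[g, h][h, g] = 1`, also `(g ⊗ h)(h ⊗ g)` centralize every tensor. By relation (3)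
conjugation by `{(g,g)}` permutes the diagonal tensors `x ⊗ x`, so `∇^q(G)` is simply the subgroup
they generate; it is therefore abelian, and by relation (6) its generators satisfy
`(x ⊗ x)^q = {(1,1)} = (1 ⊗ 1)^q = 1`.
-/

section ClosureOfCommuting

variable {M : Type} [Group M]

theorem Subgroup.normalClosure_eq_closure_of_normalizer_eq_top {s : Set M}
    (hs : Subgroup.normalizer s = ⊤) : Subgroup.normalClosure s = Subgroup.closure s := by
  refine le_antisymm (Subgroup.closure_mono fun x hx => ?_)
    (Subgroup.closure_le _ |>.mpr Subgroup.subset_normalClosure)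
  obtain ⟨a, ha, hax⟩ := Group.mem_conjugatesOfSet_iff.mp hx
  obtain ⟨c, rfl⟩ := isConj_iff.mp hax
  exact (Subgroup.mem_set_normalizer_iff.mp (hs ▸ Subgroup.mem_top c) a).mp ha

theorem Subgroup.mul_comm_of_mem_closure {s : Set M}
    (hcomm : ∀ x ∈ s, ∀ y ∈ s, x * y = y * x) :
    ∀ x ∈ Subgroup.closure s, ∀ y ∈ Subgroup.closure s, x * y = y * x := fun x hx y hy =>
  have hcent := Subgroup.closure_le_centralizer_centralizer s
  Set.centralizer_centralizer_comm_of_comm hcomm x (hcent hx) y (hcent hy)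

theorem Subgroup.pow_eq_one_of_mem_closure {s : Set M} {n : ℕ}
    (hcomm : ∀ x ∈ s, ∀ y ∈ s, x * y = y * x) (hpow : ∀ x ∈ s, x ^ n = 1) :
    ∀ x ∈ Subgroup.closure s, x ^ n = 1 := by
  intro x hx
  induction hx using Subgroup.closure_induction with
  | mem x hx => exact hpow x hx
  | one => exact one_pow n
  | mul x y hx hy ihx ihy =>
    have hxy : Commute x y := Subgroup.mul_comm_of_mem_closure hcomm x hx y hy
    rw [hxy.mul_pow, ihx, ihy, one_mul]
  | inv x _ ih => rw [inv_pow, ih, inv_one]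

end ClosureOfCommuting

namespace QTensor

variable {G : Type} [Group G] {q : ℕ}

theorem tmk_mul_left (g g₁ h : G) :
    tmk G q (g * g₁) h = tmk G q (g * g₁ * g⁻¹) (g * h * g⁻¹) * tmk G q g h :=
  PresentedGroup.mk_eq_mk_of_mul_inv_mem <|
    Or.inl <| Or.inl <| Or.inl <| Or.inl <| Or.inl <| Or.inl ⟨g, g₁, h, rfl⟩

theorem tmk_mul_right (g h h₁ : G) :
    tmk G q g (h * h₁) = tmk G q g h * tmk G q (h * g * h⁻¹) (h * h₁ * h⁻¹) :=
  PresentedGroup.mk_eq_mk_of_mul_inv_mem <|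
    Or.inl <| Or.inl <| Or.inl <| Or.inl <| Or.inl <| Or.inr ⟨g, h, h₁, rfl⟩

theorem dmk_mul_tmk_mul_inv (g g₁ h₁ : G) :
    dmk G q g * tmk G q g₁ h₁ * (dmk G q g)⁻¹ =
      tmk G q (g ^ q * g₁ * (g ^ q)⁻¹) (g ^ q * h₁ * (g ^ q)⁻¹) :=
  PresentedGroup.mk_eq_mk_of_mul_inv_mem <|
    Or.inl <| Or.inl <| Or.inl <| Or.inl <| Or.inr ⟨g, g₁, h₁, rfl⟩

theorem dmk_commutator (g h : G) : dmk G q (g * h * g⁻¹ * h⁻¹) = tmk G q g h ^ q :=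
  PresentedGroup.mk_eq_mk_of_mul_inv_mem <| Or.inl <| Or.inr ⟨g, h, rfl⟩

theorem tmk_one_left (h : G) : tmk G q 1 h = 1 := by
  have h1 := tmk_mul_left (q := q) 1 1 h
  simp only [one_mul, mul_one, inv_one] at h1
  exact mul_eq_left.mp h1.symm

theorem dmk_one : dmk G q 1 = 1 := by
  simpa [tmk_one_left] using dmk_commutator (q := q) (1 : G) 1

theorem tmk_self_pow_eq_one (g : G) : tmk G q g g ^ q = 1 := by
  simpa [dmk_one] using (dmk_commutator (q := q) g g).symm

/-- Expanding `(g x) ⊗ (h y)` by relation (1) first and by relation (2) first gives two words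
that agree outside one pair of adjacent letters. -/
theorem semiconjBy_tmk_conj (g h x y : G) :
    SemiconjBy (tmk G q g h) (tmk G q (h * g * x * (h * g)⁻¹) (h * g * y * (h * g)⁻¹))
      (tmk G q (g * h * x * (g * h)⁻¹) (g * h * y * (g * h)⁻¹)) := by
  have left_first : tmk G q (g * x) (h * y) =
      tmk G q (g * x * g⁻¹) (g * h * g⁻¹) *
        (tmk G q (g * h * x * (g * h)⁻¹) (g * h * y * (g * h)⁻¹) * tmk G q g h) *
        tmk G q (h * g * h⁻¹) (h * y * h⁻¹) := by
    rw [tmk_mul_left g x (h * y), tmk_mul_right g h y,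
      show g * (h * y) * g⁻¹ = (g * h * g⁻¹) * (g * y * g⁻¹) by group,
      tmk_mul_right (g * x * g⁻¹) (g * h * g⁻¹) (g * y * g⁻¹),
      show (g * h * g⁻¹) * (g * x * g⁻¹) * (g * h * g⁻¹)⁻¹ = g * h * x * (g * h)⁻¹ by group,
      show (g * h * g⁻¹) * (g * y * g⁻¹) * (g * h * g⁻¹)⁻¹ = g * h * y * (g * h)⁻¹ by group]
    simp only [mul_assoc]
  have right_first : tmk G q (g * x) (h * y) =
      tmk G q (g * x * g⁻¹) (g * h * g⁻¹) *
        (tmk G q g h * tmk G q (h * g * x * (h * g)⁻¹) (h * g * y * (h * g)⁻¹)) *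
        tmk G q (h * g * h⁻¹) (h * y * h⁻¹) := by
    rw [tmk_mul_right (g * x) h y, tmk_mul_left g x h,
      show h * (g * x) * h⁻¹ = (h * g * h⁻¹) * (h * x * h⁻¹) by group,
      tmk_mul_left (h * g * h⁻¹) (h * x * h⁻¹) (h * y * h⁻¹),
      show (h * g * h⁻¹) * (h * x * h⁻¹) * (h * g * h⁻¹)⁻¹ = h * g * x * (h * g)⁻¹ by group,
      show (h * g * h⁻¹) * (h * y * h⁻¹) * (h * g * h⁻¹)⁻¹ = h * g * y * (h * g)⁻¹ by group]
    simp only [mul_assoc]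
  exact (mul_left_cancel (mul_right_cancel (left_first.symm.trans right_first))).symm

open scoped commutatorElement

theorem semiconjBy_tmk (g h a b : G) :
    SemiconjBy (tmk G q g h) (tmk G q a b)
      (tmk G q (⁅g, h⁆ * a * ⁅g, h⁆⁻¹) (⁅g, h⁆ * b * ⁅g, h⁆⁻¹)) := by
  rw [commutatorElement_def]
  convert semiconjBy_tmk_conj (q := q) g h ((h * g)⁻¹ * a * (h * g)) ((h * g)⁻¹ * b * (h * g))
    using 2 <;> group

theorem commute_tmk_self (g a b : G) : Commute (tmk G q g g) (tmk G q a b) := by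
  have h := semiconjBy_tmk (q := q) g g a b
  simp only [commutatorElement_self, one_mul, inv_one, mul_one] at h
  exact h

theorem commute_tmk_mul_tmk_swap (g h a b : G) :
    Commute (tmk G q g h * tmk G q h g) (tmk G q a b) := by
  have conj_cancel : ∀ c x : G, c * (c⁻¹ * x * c⁻¹⁻¹) * c⁻¹ = x := by intros; group
  have h1 := semiconjBy_tmk (q := q) h g a b
  have h2 := semiconjBy_tmk (q := q) g h (⁅h, g⁆ * a * ⁅h, g⁆⁻¹) (⁅h, g⁆ * b * ⁅h, g⁆⁻¹)
  rw [← commutatorElement_inv g h] at h1 h2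
  rw [conj_cancel, conj_cancel] at h2
  exact h2.mul_left h1

variable (G q) in
def diagonal : Set (tensorSquare G q) := {x | ∃ g : G, x = tmk G q g g}

theorem diagonal_pairwise_commute :
    ∀ x ∈ diagonal G q, ∀ y ∈ diagonal G q, x * y = y * x := by
  rintro _ ⟨g, rfl⟩ _ ⟨h, rfl⟩
  exact commute_tmk_self g h h

theorem dmk_mem_normalizer_diagonal (a : G) : dmk G q a ∈ Subgroup.normalizer (diagonal G q) := by
  refine Subgroup.mem_set_normalizer_iff.mpr fun n => ⟨?_, ?_⟩
  · rintro ⟨g, rfl⟩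
    exact ⟨_, dmk_mul_tmk_mul_inv a g g⟩
  · rintro ⟨g, hg⟩
    refine ⟨(a ^ q)⁻¹ * g * a ^ q,
      mul_left_cancel (a := dmk G q a) (mul_right_cancel (b := (dmk G q a)⁻¹) ?_)⟩
    rw [hg, dmk_mul_tmk_mul_inv]
    congr 1 <;> group

theorem normalizer_diagonal_eq_top : Subgroup.normalizer (diagonal G q) = ⊤ := by
  refine eq_top_iff.mpr fun w _ => PresentedGroup.generated_by _ _ (fun j => ?_) w
  cases j with
  | t a b =>
    refine Subgroup.centralizer_le_normalizer _ (Subgroup.mem_centralizer_iff.mpr ?_)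
    rintro _ ⟨g, rfl⟩
    exact commute_tmk_self g a b
  | d a => exact dmk_mem_normalizer_diagonal a

theorem nabla_eq_closure_diagonal : nabla G q = Subgroup.closure (diagonal G q) :=
  Subgroup.normalClosure_eq_closure_of_normalizer_eq_top normalizer_diagonal_eq_top

end QTensor

open QTensor in
theorem nabla_exponent_and_comm_general (q : ℕ) (G : Type) [Group G] :
    (∀ x ∈ nabla G q, x ^ q = 1) ∧
    (∀ x ∈ nabla G q, ∀ y ∈ nabla G q, x * y = y * x) ∧
    (∀ g h a b : G,
      tmk G q g g * tmk G q a b = tmk G q a b * tmk G q g g ∧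
      (tmk G q g h * tmk G q h g) * tmk G q a b
        = tmk G q a b * (tmk G q g h * tmk G q h g)) := by
  rw [nabla_eq_closure_diagonal]
  refine ⟨Subgroup.pow_eq_one_of_mem_closure diagonal_pairwise_commute ?_,
    Subgroup.mul_comm_of_mem_closure diagonal_pairwise_commute,
    fun g h a b => ⟨commute_tmk_self g a b, commute_tmk_mul_tmk_swap g h a b⟩⟩
  rintro _ ⟨g, rfl⟩
  exact tmk_self_pow_eq_one g

open QTensor in
/-- For positive `q`: the exponent of `∇^q(G)` divides `q`; `∇^q(G)` is abelian;
and the elements `g ⊗ g` and `(g ⊗ h)(h ⊗ g)` commute with every `a ⊗ b`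
in `G ⊗^q G`. -/
theorem nabla_exponent_and_comm (q : ℕ) (hq : 0 < q) (G : Type) [Group G] :
    (∀ x ∈ nabla G q, x ^ q = 1) ∧
    (∀ x ∈ nabla G q, ∀ y ∈ nabla G q, x * y = y * x) ∧
    (∀ g h a b : G,
      tmk G q g g * tmk G q a b = tmk G q a b * tmk G q g g ∧
      (tmk G q g h * tmk G q h g) * tmk G q a b
        = tmk G q a b * (tmk G q g h * tmk G q h g)) :=
  nabla_exponent_and_comm_general q G
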